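/- The expressivity of TransEQ is in accord with that of the scoring function it uses in its decoder: for every scoring function φ and every number of layers L, the set of score functions on facts realizable by the TransEQ model with L-layer R-GCN encoder and decoder φ is equal to the set of score functions realizable by φ alone, i.e., { φ (Enc_{W¹,…,W^L} h⁰) ρ : W¹, …, W^L layer parameters, h⁰ : V → ℝ^d, ρ : Rel → ℝ^d } = { φ h ρ : h : V → ℝ^d, ρ : Rel → ℝ^d } as subsets of F → ℝ. -/
import Mathlib


/-- An R-GCN layer (activation removed). -/
noncomputable def rgcnLayer {V Rel : Type} [Fintype Rel] {d : ℕ}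
    (N : Rel → V → Finset V)
    (W : Rel → Matrix (Fin d) (Fin d) ℝ) (W₀ : Matrix (Fin d) (Fin d) ℝ)
    (h : V → Fin d → ℝ) : V → Fin d → ℝ :=
  fun t =>
    (∑ r : Rel, ∑ u ∈ N r t, (((N r t).card : ℝ))⁻¹ • (W r).mulVec (h u)) +
      W₀.mulVec (h t)

/-- The `L`-layer R-GCN encoder: the composition `Layer_{W^L} ∘ ⋯ ∘ Layer_{W¹}`. -/
noncomputable def rgcnEncoder {V Rel : Type} [Fintype Rel] {d : ℕ}
    (N : Rel → V → Finset V) :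
    (L : ℕ) →
      (Fin L → (Rel → Matrix (Fin d) (Fin d) ℝ) × Matrix (Fin d) (Fin d) ℝ) →
        (V → Fin d → ℝ) → (V → Fin d → ℝ)
  | 0, _, h => h
  | L + 1, Ws, h =>
      rgcnLayer N (Ws (Fin.last L)).1 (Ws (Fin.last L)).2
        (rgcnEncoder N L (fun i => Ws i.castSucc) h)


lemma rgcnLayer_id {V Rel : Type} [Fintype Rel] {d : ℕ}
    (N : Rel → V → Finset V) (h : V → Fin d → ℝ) :
    rgcnLayer N (fun _ => (0 : Matrix (Fin d) (Fin d) ℝ)) 1 h = h := by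
  funext t
  simp [rgcnLayer, Matrix.one_mulVec, Matrix.zero_mulVec]

lemma rgcnEncoder_id {V Rel : Type} [Fintype Rel] {d : ℕ}
    (N : Rel → V → Finset V) (L : ℕ) (h : V → Fin d → ℝ) :
    rgcnEncoder N L (fun _ => ((fun _ => (0 : Matrix (Fin d) (Fin d) ℝ)), 1)) h = h := by
  induction L with
  | zero => rfl
  | succ L ih => simpa [rgcnEncoder, ih] using rgcnLayer_id N h

/-- The expressivity of TransEQ is in accord with that of the scoring
function used in its decoder: the set of score functions realizable by the TransEQ
model with `L`-layer R-GCN encoder and decoder `φ` equals the set of score functions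
realizable by `φ` alone. -/
theorem transEQ_realizable_eq {V Rel F : Type}
    [Fintype V] [Fintype Rel] [Fintype F] {d : ℕ}
    (N : Rel → V → Finset V)
    (φ : (V → Fin d → ℝ) → (Rel → Fin d → ℝ) → F → ℝ) (L : ℕ) :
    {g : F → ℝ |
        ∃ (Ws : Fin L → (Rel → Matrix (Fin d) (Fin d) ℝ) × Matrix (Fin d) (Fin d) ℝ)
          (h0 : V → Fin d → ℝ) (ρ : Rel → Fin d → ℝ),
          g = φ (rgcnEncoder N L Ws h0) ρ} =
      {g : F → ℝ | ∃ (h : V → Fin d → ℝ) (ρ : Rel → Fin d → ℝ), g = φ h ρ} := by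
  ext g
  constructor
  · rintro ⟨Ws, h0, ρ, rfl⟩
    exact ⟨_, ρ, rfl⟩
  · rintro ⟨h, ρ, rfl⟩
    exact ⟨fun _ => ((fun _ => 0), 1), h, ρ, by rw [rgcnEncoder_id]⟩
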